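/- arXiv:2210.02170 — 4 statements merged into one kernel-verified Lean document; each statement's English description precedes it below -/
import Mathlib

section
/- Let (X, d) be a metric space (with d inducing the topology of X). Let I be a set and {B_i}_{i∈I} a covering of X consisting of mutually disjoint clopen subsets. Let P = {p_i}_{i∈I} be points with p_i ∈ B_i, let {e_i}_{i∈I} be metrics with e_i a metric on B_i inducing the subspace topology of B_i, and let h be a metric on P inducing the discrete topology on P. Define D : X² → [0,∞) by D(x,y) = e_i(x,y) if x, y ∈ B_i, and D(x,y) = e_i(x, p_i) + h(p_i, p_j) + e_j(p_j, y) if x ∈ B_i, y ∈ B_j with i ≠ j. Then D is a metric on X inducing the topology of X, and D restricted to B_i² equals e_i for all i ∈ I. Moreover, if for every i ∈ I both the d-diameter of B_i and the e_i-diameter of B_i are at most ε, then sup_{x,y∈X} |D(x,y) − d(x,y)| ≤ 4ε + sup_{p,q∈P} |d(p,q) − h(p,q)|. -/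
/-- A metric on `X` (as a distance function) that induces the topology of `X`. -/
structure MetricOn (X : Type*) [TopologicalSpace X] where
  toFun : X → X → ℝ
  symm : ∀ x y, toFun x y = toFun y x
  refl : ∀ x, toFun x x = 0
  eq_of : ∀ x y, toFun x y = 0 → x = y
  triangle : ∀ x y z, toFun x z ≤ toFun x y + toFun y z
  isOpen_iff : ∀ s : Set X, IsOpen s ↔ ∀ x ∈ s, ∃ ε > 0, ∀ y, toFun x y < ε → y ∈ s

/-- Amalgamation of metrics along a disjoint clopen cover: the glued
function `D` is a metric inducing the topology of `X`, it restricts to `e_i` on each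
piece, and if all pieces have `d`- and `e_i`-diameter at most `ε`, then
`sup |D - d| ≤ 4ε + sup_{p,q ∈ P} |d(p,q) - h(p,q)|`. -/
theorem stmt16 {X : Type*} [TopologicalSpace X] (d : MetricOn X)
    {I : Type*} (B : I → Set X)
    (hcov : (⋃ i, B i) = Set.univ)
    (hdisj : ∀ i j, i ≠ j → B i ∩ B j = ∅)
    (hclopen : ∀ i, IsClopen (B i))
    (p : I → X) (hp : ∀ i, p i ∈ B i)
    (e : (i : I) → MetricOn (B i))
    (h : I → I → ℝ)
    (hsymm : ∀ i j, h i j = h j i)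
    (hrefl : ∀ i, h i i = 0)
    (heq : ∀ i j, h i j = 0 → i = j)
    (htri : ∀ i j l, h i l ≤ h i j + h j l)
    (hdisc : ∀ i, ∃ ε > (0:ℝ), ∀ j, h i j < ε → j = i)
    (D : X → X → ℝ)
    (hD1 : ∀ (i : I) (x y : B i), D (x : X) (y : X) = (e i).toFun x y)
    (hD2 : ∀ (i j : I), i ≠ j → ∀ (x : B i) (y : B j),
      D (x : X) (y : X) =
        (e i).toFun x ⟨p i, hp i⟩ + h i j + (e j).toFun ⟨p j, hp j⟩ y) :
    (∃ DM : MetricOn X, DM.toFun = D) ∧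
    (∀ (i : I) (x y : B i), D (x : X) (y : X) = (e i).toFun x y) ∧
    (∀ ε C : ℝ,
      (∀ i, ∀ x y : B i, d.toFun (x : X) (y : X) ≤ ε) →
      (∀ i, ∀ x y : B i, (e i).toFun x y ≤ ε) →
      (∀ i j, |d.toFun (p i) (p j) - h i j| ≤ C) →
      ∀ x y : X, |D x y - d.toFun x y| ≤ 4 * ε + C) := by
  classical
  -- index function
  have hmem : ∀ x : X, ∃ i, x ∈ B i := by
    intro x
    have : x ∈ ⋃ i, B i := hcov.symm ▸ Set.mem_univ x
    exact Set.mem_iUnion.mp this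
  choose idx hidx using hmem
  have huniq : ∀ (i : I) (x : X), x ∈ B i → idx x = i := by
    intro i x hx
    by_contra hne
    have := hdisj (idx x) i hne
    exact absurd (Set.mem_inter (hidx x) hx) (by simp [this])
  -- nonnegativity
  have enn : ∀ (i : I) (x y : B i), 0 ≤ (e i).toFun x y := by
    intro i x y
    have t := (e i).triangle x y x
    have r := (e i).refl x
    have s := (e i).symm x y
    linarith
  have hnn : ∀ i j, 0 ≤ h i j := by
    intro i j
    have t := htri i j i
    have r := hrefl i
    have s := hsymm i j
    linarith
  have dnn : ∀ x y : X, 0 ≤ d.toFun x y := by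
    intro x y
    have t := d.triangle x y x
    have r := d.refl x
    have s := d.symm x y
    linarith
  -- formulas
  have Deq : ∀ (i : I) (x y : X) (hx : x ∈ B i) (hy : y ∈ B i),
      D x y = (e i).toFun ⟨x, hx⟩ ⟨y, hy⟩ := fun i x y hx hy => hD1 i ⟨x, hx⟩ ⟨y, hy⟩
  have Dne : ∀ (i j : I), i ≠ j → ∀ (x y : X) (hx : x ∈ B i) (hy : y ∈ B j),
      D x y = (e i).toFun ⟨x, hx⟩ ⟨p i, hp i⟩ + h i j + (e j).toFun ⟨p j, hp j⟩ ⟨y, hy⟩ :=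
    fun i j hij x y hx hy => hD2 i j hij ⟨x, hx⟩ ⟨y, hy⟩
  refine ⟨⟨⟨D, ?_, ?_, ?_, ?_, ?_⟩, rfl⟩, hD1, ?_⟩
  · -- symm
    intro x y
    by_cases hij : idx x = idx y
    · have hy : y ∈ B (idx x) := hij ▸ hidx y
      rw [Deq (idx x) x y (hidx x) hy, Deq (idx x) y x hy (hidx x), (e (idx x)).symm]
    · rw [Dne (idx x) (idx y) hij x y (hidx x) (hidx y),
        Dne (idx y) (idx x) (Ne.symm hij) y x (hidx y) (hidx x),
        hsymm (idx x) (idx y), (e (idx x)).symm, (e (idx y)).symm]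
      ring
  · -- refl
    intro x
    rw [Deq (idx x) x x (hidx x) (hidx x), (e (idx x)).refl]
  · -- eq_of
    intro x y hxy
    by_cases hij : idx x = idx y
    · have hy : y ∈ B (idx x) := hij ▸ hidx y
      rw [Deq (idx x) x y (hidx x) hy] at hxy
      have := (e (idx x)).eq_of _ _ hxy
      exact congrArg Subtype.val this
    · exfalso
      rw [Dne (idx x) (idx y) hij x y (hidx x) (hidx y)] at hxy
      have h1 := enn (idx x) ⟨x, hidx x⟩ ⟨p (idx x), hp (idx x)⟩
      have h2 := enn (idx y) ⟨p (idx y), hp (idx y)⟩ ⟨y, hidx y⟩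
      have h3 := hnn (idx x) (idx y)
      have : h (idx x) (idx y) = 0 := by linarith
      exact hij (heq _ _ this)
  · -- triangle
    intro x y z
    set i := idx x with hi
    set j := idx y with hj
    set k := idx z with hk
    by_cases hijk : i = j
    · have hyB : y ∈ B i := hijk ▸ hidx y
      by_cases hjk : i = k
      · have hzB : z ∈ B i := hjk ▸ hidx z
        rw [Deq i x z (hidx x) hzB, Deq i x y (hidx x) hyB, Deq i y z hyB hzB]
        exact (e i).triangle _ _ _
      · rw [Dne i k hjk x z (hidx x) (hidx z), Deq i x y (hidx x) hyB,
          Dne i k hjk y z hyB (hidx z)]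
        have := (e i).triangle ⟨x, hidx x⟩ ⟨y, hyB⟩ ⟨p i, hp i⟩
        linarith
    · by_cases hik : i = k
      · have hzB : z ∈ B i := hik ▸ hidx z
        rw [Deq i x z (hidx x) hzB, Dne i j hijk x y (hidx x) (hidx y),
          Dne j i (fun hh => hijk hh.symm) y z (hidx y) hzB]
        have t1 := (e i).triangle ⟨x, hidx x⟩ ⟨p i, hp i⟩ ⟨z, hzB⟩
        have h1 := enn j ⟨p j, hp j⟩ ⟨y, hidx y⟩
        have h2 := enn j ⟨y, hidx y⟩ ⟨p j, hp j⟩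
        have h3 := hnn i j
        have h4 := hnn j i
        linarith
      · by_cases hjk : j = k
        · have hzB : z ∈ B j := hjk ▸ hidx z
          rw [Dne i j hijk x z (hidx x) hzB, Dne i j hijk x y (hidx x) (hidx y),
            Deq j y z (hidx y) hzB]
          have := (e j).triangle ⟨p j, hp j⟩ ⟨y, hidx y⟩ ⟨z, hzB⟩
          linarith
        · rw [Dne i k hik x z (hidx x) (hidx z), Dne i j hijk x y (hidx x) (hidx y),
            Dne j k hjk y z (hidx y) (hidx z)]
          have t1 := htri i j k
          have h1 := enn j ⟨p j, hp j⟩ ⟨y, hidx y⟩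
          have h2 := enn j ⟨y, hidx y⟩ ⟨p j, hp j⟩
          linarith
  · -- isOpen_iff
    intro s
    constructor
    · intro hs x hx
      set i := idx x
      have hpre : IsOpen (Subtype.val ⁻¹' s : Set (B i)) := hs.preimage continuous_subtype_val
      obtain ⟨ε₁, hε₁, hball₁⟩ := ((e i).isOpen_iff _).mp hpre ⟨x, hidx x⟩ hx
      obtain ⟨ε₂, hε₂, hball₂⟩ := hdisc i
      refine ⟨min ε₁ ε₂, lt_min hε₁ hε₂, ?_⟩
      intro y hy
      by_cases hij : i = idx y
      · have hyB : y ∈ B i := hij ▸ hidx y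
        rw [Deq i x y (hidx x) hyB] at hy
        exact hball₁ ⟨y, hyB⟩ (lt_of_lt_of_le hy (min_le_left _ _))
      · exfalso
        rw [Dne i (idx y) hij x y (hidx x) (hidx y)] at hy
        have h1 := enn i ⟨x, hidx x⟩ ⟨p i, hp i⟩
        have h2 := enn (idx y) ⟨p (idx y), hp (idx y)⟩ ⟨y, hidx y⟩
        have : h i (idx y) < ε₂ := by
          have := min_le_right ε₁ ε₂
          linarith
        exact hij (hball₂ _ this).symm
    · intro hball
      have hs : s = ⋃ i, s ∩ B i := by
        ext z
        simp only [Set.mem_iUnion, Set.mem_inter_iff]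
        exact ⟨fun hz => ⟨idx z, hz, hidx z⟩, fun ⟨_, hz, _⟩ => hz⟩
      rw [hs]
      refine isOpen_iUnion fun i => ?_
      have hopen : IsOpen (Subtype.val ⁻¹' s : Set (B i)) := by
        rw [(e i).isOpen_iff]
        rintro ⟨x, hxB⟩ hxs
        obtain ⟨ε, hε, hb⟩ := hball x hxs
        refine ⟨ε, hε, ?_⟩
        rintro ⟨y, hyB⟩ hy
        have : D x y = (e i).toFun ⟨x, hxB⟩ ⟨y, hyB⟩ := Deq i x y hxB hyB
        exact hb y (by rw [this]; exact hy)
      obtain ⟨U, hU, hUeq⟩ := isOpen_induced_iff.mp hopen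
      have : s ∩ B i = U ∩ B i := by
        ext z
        constructor
        · rintro ⟨hzs, hzB⟩
          have : (⟨z, hzB⟩ : B i) ∈ Subtype.val ⁻¹' s := hzs
          rw [← hUeq] at this
          exact ⟨this, hzB⟩
        · rintro ⟨hzU, hzB⟩
          have : (⟨z, hzB⟩ : B i) ∈ Subtype.val ⁻¹' U := hzU
          rw [hUeq] at this
          exact ⟨this, hzB⟩
      rw [this]
      exact hU.inter (hclopen i).isOpen
  · -- quantitative estimate
    intro ε C hεd hεe hC x y
    have hε0 : 0 ≤ ε := le_trans (dnn (p (idx x)) (p (idx x)))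
      (hεd (idx x) ⟨p (idx x), hp (idx x)⟩ ⟨p (idx x), hp (idx x)⟩)
    have hC0 : 0 ≤ C := le_trans (abs_nonneg _) (hC (idx x) (idx x))
    rw [abs_le]
    by_cases hij : idx x = idx y
    · have hyB : y ∈ B (idx x) := hij ▸ hidx y
      rw [Deq (idx x) x y (hidx x) hyB]
      have h1 := hεe (idx x) ⟨x, hidx x⟩ ⟨y, hyB⟩
      have h2 := hεd (idx x) ⟨x, hidx x⟩ ⟨y, hyB⟩
      have h3 := enn (idx x) ⟨x, hidx x⟩ ⟨y, hyB⟩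
      have h4 := dnn x y
      constructor <;> linarith
    · rw [Dne (idx x) (idx y) hij x y (hidx x) (hidx y)]
      have h1 := hεe (idx x) ⟨x, hidx x⟩ ⟨p (idx x), hp (idx x)⟩
      have h2 := hεe (idx y) ⟨p (idx y), hp (idx y)⟩ ⟨y, hidx y⟩
      have h3 := enn (idx x) ⟨x, hidx x⟩ ⟨p (idx x), hp (idx x)⟩
      have h4 := enn (idx y) ⟨p (idx y), hp (idx y)⟩ ⟨y, hidx y⟩
      have h5 := hεd (idx x) ⟨x, hidx x⟩ ⟨p (idx x), hp (idx x)⟩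
      have h6 := hεd (idx y) ⟨p (idx y), hp (idx y)⟩ ⟨y, hidx y⟩
      have hCij := abs_le.mp (hC (idx x) (idx y))
      have t1 := d.triangle x (p (idx x)) y
      have t2 := d.triangle (p (idx x)) (p (idx y)) y
      have t4 := d.triangle x y (p (idx y))
      have t5 := d.triangle (p (idx x)) x (p (idx y))
      have s1 := d.symm (p (idx x)) x
      have s2 := d.symm y (p (idx y))
      have s3 := d.symm (p (idx y)) y
      constructor <;> linarith
end

section
/- Let (X, d) be a metric space (with d inducing the topology of X), let {B_i}_{i∈I} be a covering of X by mutually disjoint clopen subsets, let p_i ∈ B_i, let e_i be a metric on B_i inducing the subspace topology of B_i for each i ∈ I, and let h be a metric on P = {p_i}_{i∈I} inducing the discrete topology on P. Define D : X² → [0,∞) by D(x,y) = e_i(x,y) if x, y ∈ B_i, and D(x,y) = e_i(x, p_i) + h(p_i, p_j) + e_j(p_j, y) if x ∈ B_i, y ∈ B_j with i ≠ j. If h is uniformly discrete and each metric e_i is complete, then the metric D is complete. -/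
/-- A metric is complete if every Cauchy sequence converges (with respect to it). -/
def CompleteM {X : Type*} [TopologicalSpace X] (d : MetricOn X) : Prop :=
  ∀ u : ℕ → X,
    (∀ ε > (0:ℝ), ∃ N, ∀ m ≥ N, ∀ n ≥ N, d.toFun (u m) (u n) < ε) →
    ∃ a : X, ∀ ε > (0:ℝ), ∃ N, ∀ n ≥ N, d.toFun (u n) a < ε

/-- In the amalgamation of metrics along a disjoint clopen cover, if
`h` is uniformly discrete and each metric `e_i` is complete, then the glued metric `D`
is complete (every `D`-Cauchy sequence `D`-converges). -/
theorem stmt17 {X : Type*} [TopologicalSpace X] (d : MetricOn X)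
    {I : Type*} (B : I → Set X)
    (hcov : (⋃ i, B i) = Set.univ)
    (hdisj : ∀ i j, i ≠ j → B i ∩ B j = ∅)
    (hclopen : ∀ i, IsClopen (B i))
    (p : I → X) (hp : ∀ i, p i ∈ B i)
    (e : (i : I) → MetricOn (B i))
    (h : I → I → ℝ)
    (hsymm : ∀ i j, h i j = h j i)
    (hrefl : ∀ i, h i i = 0)
    (heq : ∀ i j, h i j = 0 → i = j)
    (htri : ∀ i j l, h i l ≤ h i j + h j l)
    (hdisc : ∀ i, ∃ ε > (0:ℝ), ∀ j, h i j < ε → j = i)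
    (D : X → X → ℝ)
    (hD1 : ∀ (i : I) (x y : B i), D (x : X) (y : X) = (e i).toFun x y)
    (hD2 : ∀ (i j : I), i ≠ j → ∀ (x : B i) (y : B j),
      D (x : X) (y : X) =
        (e i).toFun x ⟨p i, hp i⟩ + h i j + (e j).toFun ⟨p j, hp j⟩ y)
    (hunif : ∃ c > (0:ℝ), ∀ i j, i ≠ j → c < h i j)
    (hcomp : ∀ i, CompleteM (e i)) :
    ∀ u : ℕ → X,
      (∀ ε > (0:ℝ), ∃ N, ∀ m ≥ N, ∀ n ≥ N, D (u m) (u n) < ε) →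
      ∃ a : X, ∀ ε > (0:ℝ), ∃ N, ∀ n ≥ N, D (u n) a < ε := by
  classical
  have nonneg : ∀ {Y : Type u_1} [inst : TopologicalSpace Y] (m : MetricOn Y) (x y : Y),
      0 ≤ m.toFun x y := by
    intro Y _ m x y
    have t := m.triangle x y x
    rw [m.refl, m.symm y x] at t
    linarith
  intro u hu
  obtain ⟨c, hc, hcd⟩ := hunif
  obtain ⟨N, hN⟩ := hu c hc
  have hmem : ∀ x : X, ∃ i, x ∈ B i := by
    intro x
    have hx : x ∈ ⋃ i, B i := by rw [hcov]; trivial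
    simpa using hx
  obtain ⟨i, hi⟩ := hmem (u N)
  have hin : ∀ n, N ≤ n → u n ∈ B i := by
    intro n hn
    obtain ⟨j, hj⟩ := hmem (u n)
    by_cases hji : j = i
    · subst hji; exact hj
    · exfalso
      have hDe := hD2 j i hji ⟨u n, hj⟩ ⟨u N, hi⟩
      have hlt := hN n hn N le_rfl
      have h1 := nonneg (e j) ⟨u n, hj⟩ ⟨p j, hp j⟩
      have h2 := nonneg (e i) ⟨p i, hp i⟩ ⟨u N, hi⟩
      have h3 := hcd j i hji
      simp only [Subtype.coe_mk] at hDe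
      linarith
  set v : ℕ → (B i) := fun n => ⟨u (n + N), hin _ (Nat.le_add_left _ _)⟩ with hv
  have hvC : ∀ ε > (0:ℝ), ∃ M, ∀ m ≥ M, ∀ n ≥ M, (e i).toFun (v m) (v n) < ε := by
    intro ε hε
    obtain ⟨M, hM⟩ := hu ε hε
    refine ⟨M, fun m hm n hn => ?_⟩
    have := hM (m + N) (le_trans hm (Nat.le_add_right _ _))
      (n + N) (le_trans hn (Nat.le_add_right _ _))
    rwa [hD1 i (v m) (v n)] at this
  obtain ⟨a, ha⟩ := hcomp i v hvC
  refine ⟨(a : X), fun ε hε => ?_⟩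
  obtain ⟨M, hM⟩ := ha ε hε
  refine ⟨M + N, fun n hn => ?_⟩
  have hnN : N ≤ n := le_trans (Nat.le_add_left _ _) hn
  have hsub : n - N ≥ M := Nat.le_sub_of_add_le hn
  have hkey := hM (n - N) hsub
  have hveq : v (n - N) = ⟨u n, hin n hnN⟩ :=
    Subtype.ext (by simp [hv, Nat.sub_add_cancel hnN])
  rw [hveq] at hkey
  have := hD1 i ⟨u n, hin n hnN⟩ a
  simp only [Subtype.coe_mk] at this
  rw [this]
  exact hkey
end

section
/- Let X be a strongly zero-dimensional, σ-compact metrizable topological space. Then the set SR(X) of all strongly rigid metrics in Met(X) is a Gδ subset of (Met(X), D_X). -/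
/-- The supremum distance `D_X(d,e) = sup_{x,y} |d(x,y) - e(x,y)| ∈ [0,∞]` on `Met(X)`. -/
noncomputable def supDist {X : Type*} [TopologicalSpace X] (d e : MetricOn X) : ENNReal :=
  ⨆ p : X × X, ENNReal.ofReal |d.toFun p.1 p.2 - e.toFun p.1 p.2|

/-- The topology on `Met(X)` generated by the open balls of the supremum distance. -/
noncomputable instance metricOnTopology (X : Type*) [TopologicalSpace X] :
    TopologicalSpace (MetricOn X) :=
  TopologicalSpace.generateFrom
    {B | ∃ (d : MetricOn X) (ε : ℝ), 0 < ε ∧ B = {e | supDist d e < ENNReal.ofReal ε}}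

/-- A metric is strongly rigid if `d(x,y) = d(u,v) ≠ 0` implies `{x,y} = {u,v}`. -/
def StronglyRigid {X : Type*} [TopologicalSpace X] (d : MetricOn X) : Prop :=
  ∀ x y u v : X, d.toFun x y = d.toFun u v → d.toFun x y ≠ 0 →
    ({x, y} : Set X) = ({u, v} : Set X)

/-- A space is strongly zero-dimensional if any two disjoint closed sets are separated
by a clopen set. -/
def StronglyZeroDim (X : Type*) [TopologicalSpace X] : Prop :=
  ∀ A B : Set X, IsClosed A → IsClosed B → A ∩ B = ∅ →
    ∃ V : Set X, IsClopen V ∧ A ⊆ V ∧ V ∩ B = ∅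

namespace Stmt18Aux

open Filter Topology Set

variable {X : Type*} [TopologicalSpace X]

lemma dnonneg (d : MetricOn X) (x y : X) : 0 ≤ d.toFun x y := by
  have h := d.triangle x y x
  have h1 := d.refl x
  have h2 := d.symm y x
  linarith

lemma isOpen_dball (d : MetricOn X) (x0 : X) (δ : ℝ) :
    IsOpen {y | d.toFun x0 y < δ} := by
  rw [d.isOpen_iff]
  intro x hx
  simp only [Set.mem_setOf_eq] at hx
  refine ⟨δ - d.toFun x0 x, by linarith, fun y hy => ?_⟩
  have := d.triangle x0 x y
  simp only [Set.mem_setOf_eq]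
  linarith

lemma continuous_toFun (d : MetricOn X) :
    Continuous fun p : X × X => d.toFun p.1 p.2 := by
  rw [continuous_iff_continuousAt]
  rintro ⟨x0, y0⟩
  rw [ContinuousAt, Metric.tendsto_nhds]
  intro ε hε
  have hU : IsOpen ({y | d.toFun x0 y < ε / 2} ×ˢ {y | d.toFun y0 y < ε / 2}) :=
    (isOpen_dball d x0 _).prod (isOpen_dball d y0 _)
  have hmem : (x0, y0) ∈ ({y | d.toFun x0 y < ε / 2} ×ˢ {y | d.toFun y0 y < ε / 2}) := by
    constructor <;> simp [d.refl, hε]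
  filter_upwards [hU.mem_nhds hmem] with p hp
  obtain ⟨h1, h2⟩ := hp
  simp only [Set.mem_setOf_eq] at h1 h2
  rw [Real.dist_eq, abs_sub_lt_iff]
  have t1 := d.triangle p.1 x0 p.2
  have t2 := d.triangle x0 y0 p.2
  have t3 := d.triangle x0 p.1 y0
  have t4 := d.triangle p.1 p.2 y0
  have s1 := d.symm p.1 x0
  have s2 := d.symm y0 p.2
  have s3 := d.symm p.2 y0
  constructor <;> linarith

lemma tendsto_aux (d : MetricOn X) (E : ℕ → MetricOn X)
    (hb : ∀ k (p : X × X), |d.toFun p.1 p.2 - (E k).toFun p.1 p.2| ≤ 1 / (k + 1))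
    {s : ℕ → X × X} {p0 : X × X} (hs : Tendsto s atTop (𝓝 p0)) :
    Tendsto (fun k => (E k).toFun (s k).1 (s k).2) atTop (𝓝 (d.toFun p0.1 p0.2)) := by
  have h2 : Tendsto (fun k => d.toFun (s k).1 (s k).2) atTop (𝓝 (d.toFun p0.1 p0.2)) :=
    ((continuous_toFun d).tendsto p0).comp hs
  have h1 : Tendsto (fun k => (E k).toFun (s k).1 (s k).2 - d.toFun (s k).1 (s k).2)
      atTop (𝓝 0) := by
    apply squeeze_zero_norm (fun k => ?_) tendsto_one_div_add_atTop_nhds_zero_nat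
    rw [Real.norm_eq_abs, abs_sub_comm]
    exact hb k (s k)
  simpa using h1.add h2

/-- The "bad" set of metrics witnessing failure of strong rigidity on `K` at scale `δ`. -/
def badSet (K : Set X) (δ : ℝ) : Set (MetricOn X) :=
  {d | ∃ x y u v : X, x ∈ K ∧ y ∈ K ∧ u ∈ K ∧ v ∈ K ∧
    d.toFun x y = d.toFun u v ∧ δ ≤ d.toFun x y ∧ δ ≤ d.toFun u x ∧ δ ≤ d.toFun u y}

lemma isOpen_supBall (d : MetricOn X) {ε : ℝ} (hε : 0 < ε) :
    IsOpen {e | supDist d e < ENNReal.ofReal ε} :=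
  TopologicalSpace.isOpen_generateFrom_of_mem ⟨d, ε, hε, rfl⟩

lemma supDist_self (d : MetricOn X) : supDist d d = 0 := by
  simp [supDist]

lemma pointwise_of_supDist_lt {d e : MetricOn X} {ε : ℝ} (hε : 0 < ε)
    (h : supDist d e < ENNReal.ofReal ε) (x y : X) :
    |d.toFun x y - e.toFun x y| < ε := by
  rw [supDist] at h
  have hle : ENNReal.ofReal |d.toFun x y - e.toFun x y| ≤
      ⨆ p : X × X, ENNReal.ofReal |d.toFun p.1 p.2 - e.toFun p.1 p.2| :=
    le_iSup (fun p : X × X => ENNReal.ofReal |d.toFun p.1 p.2 - e.toFun p.1 p.2|) (x, y)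
  exact (ENNReal.ofReal_lt_ofReal_iff hε).mp (lt_of_le_of_lt hle h)

lemma isClosed_badSet [FirstCountableTopology X] {K : Set X} (hK : IsCompact K) (δ : ℝ) :
    IsClosed (badSet K δ) := by
  rw [← isOpen_compl_iff, isOpen_iff_forall_mem_open]
  intro d hd
  by_cases h : ∃ ε > 0, ∀ e, supDist d e < ENNReal.ofReal ε → e ∉ badSet K δ
  · obtain ⟨ε, hε, hball⟩ := h
    exact ⟨{e | supDist d e < ENNReal.ofReal ε}, hball, isOpen_supBall d hε,
      by simp [supDist_self, ENNReal.ofReal_pos.mpr hε]⟩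
  · exfalso
    apply hd
    push_neg at h
    have hch : ∀ k : ℕ, ∃ e, supDist d e < ENNReal.ofReal (1 / (k + 1)) ∧ e ∈ badSet K δ := by
      intro k
      obtain ⟨e, he1, he2⟩ := h (1 / (k + 1)) (by positivity)
      exact ⟨e, he1, he2⟩
    choose E hE1 hE2 using hch
    have hpt : ∀ k (p : X × X), |d.toFun p.1 p.2 - (E k).toFun p.1 p.2| ≤ 1 / (k + 1) :=
      fun k p => (pointwise_of_supDist_lt (by positivity) (hE1 k) p.1 p.2).le
    choose x y u v hx hy hu hv heq h1 h2 h3 using hE2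
    obtain ⟨a, ha, φ, hφ, hconv⟩ := (((hK.prod hK).prod (hK.prod hK)).tendsto_subseq
      (x := fun k => ((x k, y k), (u k, v k)))
      (fun k => ⟨⟨hx k, hy k⟩, ⟨hu k, hv k⟩⟩))
    obtain ⟨⟨x0, y0⟩, u0, v0⟩ := a
    obtain ⟨⟨hx0, hy0⟩, hu0, hv0⟩ := ha
    have hpt' : ∀ k (p : X × X),
        |d.toFun p.1 p.2 - (E (φ k)).toFun p.1 p.2| ≤ 1 / (k + 1) := by
      intro k p
      refine (hpt (φ k) p).trans ?_
      have hk : (k : ℝ) + 1 ≤ (φ k : ℝ) + 1 := by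
        have : k ≤ φ k := hφ.le_apply
        exact_mod_cast by omega
      exact one_div_le_one_div_of_le (by positivity) hk
    -- component convergences
    have tx : Tendsto (fun k => x (φ k)) atTop (𝓝 x0) :=
      ((continuous_fst.comp continuous_fst).tendsto _).comp hconv
    have ty : Tendsto (fun k => y (φ k)) atTop (𝓝 y0) :=
      ((continuous_snd.comp continuous_fst).tendsto _).comp hconv
    have tu : Tendsto (fun k => u (φ k)) atTop (𝓝 u0) :=
      ((continuous_fst.comp continuous_snd).tendsto _).comp hconv
    have tv : Tendsto (fun k => v (φ k)) atTop (𝓝 v0) :=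
      ((continuous_snd.comp continuous_snd).tendsto _).comp hconv
    have T1 : Tendsto (fun k => (E (φ k)).toFun (x (φ k)) (y (φ k))) atTop
        (𝓝 (d.toFun x0 y0)) :=
      tendsto_aux d (fun k => E (φ k)) hpt' (tx.prodMk_nhds ty)
    have T2 : Tendsto (fun k => (E (φ k)).toFun (u (φ k)) (v (φ k))) atTop
        (𝓝 (d.toFun u0 v0)) :=
      tendsto_aux d (fun k => E (φ k)) hpt' (tu.prodMk_nhds tv)
    have T3 : Tendsto (fun k => (E (φ k)).toFun (u (φ k)) (x (φ k))) atTop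
        (𝓝 (d.toFun u0 x0)) :=
      tendsto_aux d (fun k => E (φ k)) hpt' (tu.prodMk_nhds tx)
    have T4 : Tendsto (fun k => (E (φ k)).toFun (u (φ k)) (y (φ k))) atTop
        (𝓝 (d.toFun u0 y0)) :=
      tendsto_aux d (fun k => E (φ k)) hpt' (tu.prodMk_nhds ty)
    refine ⟨x0, y0, u0, v0, hx0, hy0, hu0, hv0, ?_, ?_, ?_, ?_⟩
    · exact tendsto_nhds_unique (T1.congr fun k => heq (φ k)) T2
    · exact ge_of_tendsto' T1 fun k => h1 (φ k)
    · exact ge_of_tendsto' T3 fun k => h2 (φ k)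
    · exact ge_of_tendsto' T4 fun k => h3 (φ k)

end Stmt18Aux

open Stmt18Aux Set in
/-- For a strongly zero-dimensional, `σ`-compact metrizable space `X`,
the set `SR(X)` of strongly rigid metrics is a `Gδ` subset of `(Met(X), D_X)`. -/
theorem stmt18 {X : Type*} [TopologicalSpace X] [TopologicalSpace.MetrizableSpace X]
    [SigmaCompactSpace X] (hX : StronglyZeroDim X) :
    IsGδ {e : MetricOn X | StronglyRigid e} := by
  have key : {e : MetricOn X | StronglyRigid e} =
      ⋂ nm : ℕ × ℕ, (badSet (compactCovering X nm.2) (1 / (nm.1 + 1)))ᶜ := by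
    ext d
    simp only [Set.mem_setOf_eq, Set.mem_iInter, Set.mem_compl_iff]
    constructor
    · rintro hSR ⟨n, m⟩ ⟨x, y, u, v, hx, hy, hu, hv, heq, hd1, hd2, hd3⟩
      have hpos : (0 : ℝ) < 1 / (n + 1) := by positivity
      have hne : d.toFun x y ≠ 0 := by intro h0; rw [h0] at hd1; linarith
      have hset := hSR x y u v heq hne
      have hu' : u ∈ ({x, y} : Set X) := by
        rw [hset]; exact Set.mem_insert u {v}
      rcases Set.mem_insert_iff.mp hu' with rfl | hu''
      · have := d.refl u
        linarith
      · rcases Set.mem_singleton_iff.mp hu'' with rfl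
        have := d.refl u
        linarith
    · intro h x y u v heq hne
      by_contra hne_set
      -- for any quadruple with a point of one pair away from the other pair, contradiction
      have key2 : ∀ a b c c' : X, d.toFun a b = d.toFun c c' → d.toFun a b ≠ 0 →
          c ≠ a → c ≠ b → False := by
        intro a b c c' habcc hab0 hca hcb
        have hab : 0 < d.toFun a b := (dnonneg d a b).lt_of_ne (Ne.symm hab0)
        have hca' : 0 < d.toFun c a :=
          (dnonneg d c a).lt_of_ne (fun h0 => hca (d.eq_of c a h0.symm))
        have hcb' : 0 < d.toFun c b :=
          (dnonneg d c b).lt_of_ne (fun h0 => hcb (d.eq_of c b h0.symm))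
        set δ0 := min (d.toFun a b) (min (d.toFun c a) (d.toFun c b)) with hδ0def
        have hδ0 : 0 < δ0 := lt_min hab (lt_min hca' hcb')
        obtain ⟨n, hn⟩ := exists_nat_one_div_lt hδ0
        obtain ⟨m1, hm1⟩ := exists_mem_compactCovering a
        obtain ⟨m2, hm2⟩ := exists_mem_compactCovering b
        obtain ⟨m3, hm3⟩ := exists_mem_compactCovering c
        obtain ⟨m4, hm4⟩ := exists_mem_compactCovering c'
        set m := max (max m1 m2) (max m3 m4) with hmdef
        have h1 : 1 / ((n : ℝ) + 1) ≤ min (d.toFun a b) (min (d.toFun c a) (d.toFun c b)) :=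
          hn.le
        exact h (n, m) ⟨a, b, c, c',
          compactCovering_subset X (le_trans (le_max_left m1 m2) (le_max_left _ _)) hm1,
          compactCovering_subset X (le_trans (le_max_right m1 m2) (le_max_left _ _)) hm2,
          compactCovering_subset X (le_trans (le_max_left m3 m4) (le_max_right _ _)) hm3,
          compactCovering_subset X (le_trans (le_max_right m3 m4) (le_max_right _ _)) hm4,
          habcc,
          le_trans h1 (min_le_left _ _),
          le_trans h1 (le_trans (min_le_right _ _) (min_le_left _ _)),
          le_trans h1 (le_trans (min_le_right _ _) (min_le_right _ _))⟩
      have hsplit : ¬({x, y} : Set X) ⊆ {u, v} ∨ ¬({u, v} : Set X) ⊆ {x, y} := by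
        by_contra hc
        push_neg at hc
        exact hne_set (Set.Subset.antisymm hc.1 hc.2)
      have hne' : d.toFun u v ≠ 0 := heq ▸ hne
      rcases hsplit with hns | hns
      · obtain ⟨w, hw1, hw2⟩ := Set.not_subset.mp hns
        simp only [Set.mem_insert_iff, Set.mem_singleton_iff, not_or] at hw1 hw2
        rcases hw1 with rfl | rfl
        · exact key2 u v w y heq.symm hne' hw2.1 hw2.2
        · exact key2 u v w x (heq.symm.trans (d.symm x w)) hne' hw2.1 hw2.2
      · obtain ⟨w, hw1, hw2⟩ := Set.not_subset.mp hns
        simp only [Set.mem_insert_iff, Set.mem_singleton_iff, not_or] at hw1 hw2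
        rcases hw1 with rfl | rfl
        · exact key2 x y w v heq hne hw2.1 hw2.2
        · exact key2 x y w u (heq.trans (d.symm u w)) hne hw2.1 hw2.2
  rw [key]
  exact IsGδ.iInter fun nm =>
    ((isClosed_badSet (isCompact_compactCovering X nm.2) _).isOpen_compl).isGδ
end

section
/- Let X be a set with at least 3 elements and let d be a strongly rigid metric on X. Then every bijective isometry f : (X,d) → (X,d) is the identity map; that is, every strongly rigid metric on a set with at least three points is rigid. -/
lemma exists_third {X : Type*} (h3 : 3 ≤ Cardinal.mk X) (x y : X) :
    ∃ z : X, z ≠ x ∧ z ≠ y := by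
  by_contra h
  push_neg at h
  have hsub : (Set.univ : Set X) ⊆ {x, y} := by
    intro z _
    rcases (em (z = x)) with h1 | h1
    · exact Or.inl h1
    · exact Or.inr (h z h1)
  have : Cardinal.mk X ≤ 2 := by
    calc Cardinal.mk X = Cardinal.mk (Set.univ : Set X) := Cardinal.mk_univ.symm
    _ ≤ Cardinal.mk ({x, y} : Set X) := Cardinal.mk_le_mk_of_subset hsub
    _ ≤ 2 := Cardinal.mk_insert_le.trans (by simp; norm_num)
  have := h3.trans this
  norm_num at this

/-- On a set with at least three elements, every strongly rigid metric
is rigid: any bijective self-isometry is the identity. -/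
theorem stmt19 {X : Type*} (h3 : 3 ≤ Cardinal.mk X)
    (d : X → X → ℝ)
    (hsymm : ∀ x y, d x y = d y x)
    (hrefl : ∀ x, d x x = 0)
    (heq : ∀ x y, d x y = 0 → x = y)
    (htri : ∀ x y z, d x z ≤ d x y + d y z)
    (hsr : ∀ x y u v : X, d x y = d u v → d x y ≠ 0 →
      ({x, y} : Set X) = ({u, v} : Set X))
    (f : X → X) (hf : Function.Bijective f)
    (hiso : ∀ x y, d (f x) (f y) = d x y) :
    f = id := by
  funext x
  simp only [id]
  by_contra hx
  obtain ⟨z, hzx, hzfx⟩ := exists_third h3 x (f x)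
  have hd : d (f z) (f x) = d z x := hiso z x
  have hne : d (f z) (f x) ≠ 0 := by
    rw [hd]; exact fun h => hzx (heq z x h)
  have hset : ({f z, f x} : Set X) = ({z, x} : Set X) := hsr _ _ _ _ hd hne
  have : f x ∈ ({z, x} : Set X) := hset ▸ (by simp : f x ∈ ({f z, f x} : Set X))
  rcases this with h | h
  · exact hzfx h.symm
  · exact hx h
end
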